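/- arXiv:1203.4069 — 2 statements merged into one kernel-verified Lean document; each statement's English description precedes it below -/
import Mathlib

section
/- For all integers k ≥ 1 and p ≥ 0, the number of lattice points x ∈ ℤ^k with |2x₁ − 1| + Σ_{i=2}^{k} 2|x_i| ≤ 2p+1 (i.e. the lattice points in a closed L¹-ball of radius p + 1/2 centered at the midpoint (1/2, 0, …, 0) of a lattice edge) equals 2·Σ_{i=0}^{p} C(k−1,i)·C(k+p−i, p−i), which also equals 2·Σ_{i=0}^{p} C(k−1,p−i)·C(k+i, i). -/
/-!
Slice by the first coordinate. A point with `x₁ = a` lies in the ball iff its other coordinates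
lie in the L¹-ball of radius `p - t` of `ℤ^(k-1)`, where `|2a - 1| = 2t + 1`; every `t ≤ p` comes
from exactly two values `a = -t` and `a = t + 1`. So the count is twice the sum of the L¹-ball
counts `B(k-1, r)` for `r ≤ p`. Slicing the L¹-ball the same way gives
`B(n+1, r) = B(n, r) + 2 ∑_{s<r} B(n, s)`, a recursion also satisfied, by Pascal's rule, by the
Delannoy numbers `∑ᵢ C(n,i) C(n+r-i, r-i)`; Pascal's rule in the second factor sums them up to the
claimed formula. The second formula is the first one summed backwards.
-/

/-- `latticeBallOdd k p hk` is the number of lattice points `x ∈ ℤ^k` with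
`|2 x₁ - 1| + ∑_{i ≥ 2} 2 |x i| ≤ 2p + 1`, i.e. the number of lattice points in a
maximal L¹-ball of odd diameter `2p+1` (radius `p + 1/2`, centered at the midpoint
`(1/2, 0, …, 0)` of a lattice edge). -/
noncomputable def latticeBallOdd (k p : ℕ) (hk : 0 < k) : ℕ :=
  Set.ncard {x : Fin k → ℤ |
    |2 * x ⟨0, hk⟩ - 1| + ∑ i ∈ Finset.univ.erase (⟨0, hk⟩ : Fin k), 2 * |x i| ≤ 2 * (p : ℤ) + 1}

open Finset

def delannoy (n r : ℕ) : ℕ :=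
  ∑ i ∈ range (r + 1), n.choose i * (n + r - i).choose (r - i)

theorem delannoy_zero_left (r : ℕ) : delannoy 0 r = 1 := by
  rw [delannoy, sum_eq_single 0
    (fun i _ hi => by simp [Nat.choose_eq_zero_of_lt (Nat.pos_of_ne_zero hi)]) (by simp)]
  simp

theorem sum_range_delannoy (n r : ℕ) :
    ∑ s ∈ range (r + 1), delannoy n s =
      ∑ i ∈ range (r + 1), n.choose i * (n + 1 + r - i).choose (r - i) := by
  induction r with
  | zero => simp [delannoy]
  | succ r ih =>
    rw [sum_range_succ, ih, delannoy, sum_range_succ _ (r + 1), sum_range_succ _ (r + 1),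
      ← add_assoc, ← sum_add_distrib]
    congr 1
    · refine sum_congr rfl fun i hi => ?_
      have hi : i ≤ r := Nat.lt_succ_iff.mp (mem_range.mp hi)
      rw [show n + 1 + (r + 1) - i = n + (r + 1) - i + 1 by omega,
        show r + 1 - i = r - i + 1 by omega, Nat.choose_succ_succ',
        show n + (r + 1) - i = n + 1 + r - i by omega]
      ring
    · simp

theorem delannoy_succ_succ (n r : ℕ) :
    delannoy (n + 1) (r + 1) = delannoy n (r + 1) + 2 * ∑ s ∈ range (r + 1), delannoy n s := by
  have pascal : ∀ i ∈ range (r + 1),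
      (n + 1).choose (i + 1) * (n + 1 + (r + 1) - (i + 1)).choose (r + 1 - (i + 1)) =
        n.choose (i + 1) * (n + 1 + (r + 1) - (i + 1)).choose (r + 1 - (i + 1)) +
          n.choose i * (n + 1 + r - i).choose (r - i) := by
    intro i _
    rw [Nat.choose_succ_succ', show n + 1 + (r + 1) - (i + 1) = n + 1 + r - i by omega,
      show r + 1 - (i + 1) = r - i by omega]
    ring
  have cumulative := sum_range_delannoy n (r + 1)
  rw [sum_range_succ, sum_range_succ' (fun i => n.choose i * _)] at cumulative
  rw [delannoy, sum_range_succ', sum_congr rfl pascal, sum_add_distrib, ← sum_range_delannoy]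
  simp only [Nat.choose_zero_right, one_mul, Nat.sub_zero] at cumulative ⊢
  omega

theorem delannoy_succ (n r : ℕ) :
    delannoy (n + 1) r = delannoy n r + 2 * ∑ s ∈ range r, delannoy n s := by
  cases r with
  | zero => simp [delannoy]
  | succ r => exact delannoy_succ_succ n r

theorem Set.ncard_eq_sum_ncard_preimage_cons {α : Type*} {n : ℕ} {S : Set (Fin (n + 1) → α)}
    (hS : S.Finite) (T : Finset α) (hT : ∀ x ∈ S, x 0 ∈ T) :
    S.ncard = ∑ a ∈ T, (Fin.cons a ⁻¹' S).ncard := by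
  classical
  rw [S.ncard_eq_toFinset_card hS,
    card_eq_sum_card_fiberwise (f := fun x => x 0) fun x hx => hT x (by simpa using hx)]
  refine sum_congr rfl fun a _ => ?_
  rw [← Set.ncard_coe_finset, ← Set.ncard_image_of_injective (Fin.cons a ⁻¹' S)
    (Fin.cons_right_injective (α := fun _ => α) a), Set.image_preimage_eq_inter_range]
  congr 1
  ext x
  simp only [coe_filter, Set.Finite.mem_toFinset, Set.mem_inter_iff, Set.mem_range]
  refine and_congr_right fun _ => ⟨fun h => ⟨Fin.tail x, ?_⟩, ?_⟩
  · subst h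
    exact Fin.cons_self_tail x
  · rintro ⟨y, rfl⟩
    rfl

theorem sum_Icc_neg_self {M : Type*} [AddCommMonoid M] (f : ℤ → M) (r : ℕ) :
    ∑ a ∈ Icc (-(r : ℤ)) r, f a = f 0 + ∑ t ∈ range r, (f (-(t + 1)) + f (t + 1)) := by
  induction r with
  | zero => simp
  | succ r ih =>
    have hIcc : Icc (-((r + 1 : ℕ) : ℤ)) (r + 1 : ℕ) =
        insert (-((r : ℤ) + 1)) (insert ((r : ℤ) + 1) (Icc (-(r : ℤ)) r)) := by
      ext; simp only [mem_insert, mem_Icc]; push_cast; omega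
    rw [hIcc, sum_insert (by simp only [mem_insert, mem_Icc]; omega), sum_insert (by simp), ih,
      sum_range_succ]
    abel

theorem sum_Icc_neg_add_one {M : Type*} [AddCommMonoid M] (f : ℤ → M) (p : ℕ) :
    ∑ a ∈ Icc (-(p : ℤ)) (p + 1), f a = ∑ t ∈ range (p + 1), (f (-t) + f (t + 1)) := by
  rw [← insert_Icc_right_eq_Icc_add_one (by omega), sum_insert (by simp), sum_Icc_neg_self,
    sum_add_distrib, sum_add_distrib, sum_range_succ' (fun t : ℕ => f (-t)),
    sum_range_succ (fun t : ℕ => f (t + 1))]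
  push_cast
  simp only [neg_zero]
  abel

def l1Ball (n r : ℕ) : Set (Fin n → ℤ) := {y | ∑ i, |y i| ≤ r}

theorem abs_le_of_mem_l1Ball {n r : ℕ} {y : Fin n → ℤ} (hy : y ∈ l1Ball n r) (i : Fin n) :
    |y i| ≤ r :=
  (single_le_sum (fun j _ => abs_nonneg (y j)) (mem_univ i)).trans hy

theorem l1Ball_finite (n r : ℕ) : (l1Ball n r).Finite :=
  (Set.finite_Icc (fun _ => -(r : ℤ)) fun _ => (r : ℤ)).subset fun _ hy =>
    ⟨fun i => (abs_le.mp (abs_le_of_mem_l1Ball hy i)).1,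
      fun i => (abs_le.mp (abs_le_of_mem_l1Ball hy i)).2⟩

theorem preimage_cons_l1Ball {n r t : ℕ} {a : ℤ} (ha : |a| = t) (ht : t ≤ r) :
    Fin.cons a ⁻¹' l1Ball (n + 1) r = l1Ball n (r - t) := by
  ext y
  simp only [l1Ball, Set.preimage_ofPred_eq, Set.mem_ofPred_eq, Fin.sum_univ_succ, Fin.cons_zero,
    Fin.cons_succ]
  omega

theorem ncard_l1Ball_succ (n r : ℕ) :
    (l1Ball (n + 1) r).ncard = (l1Ball n r).ncard + 2 * ∑ s ∈ range r, (l1Ball n s).ncard := by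
  have hfirst (x) (hx : x ∈ l1Ball (n + 1) r) : x 0 ∈ Icc (-(r : ℤ)) r :=
    mem_Icc.mpr (abs_le.mp (abs_le_of_mem_l1Ball hx 0))
  have hfiber (t : ℕ) (ht : t < r) :
      (Fin.cons (-((t : ℤ) + 1)) ⁻¹' l1Ball (n + 1) r).ncard +
          (Fin.cons ((t : ℤ) + 1) ⁻¹' l1Ball (n + 1) r).ncard =
        2 * (l1Ball n (r - (t + 1))).ncard := by
    rw [preimage_cons_l1Ball (a := -((t : ℤ) + 1))
        ((abs_neg _).trans (abs_of_nonneg (by positivity))) ht,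
      preimage_cons_l1Ball (a := (t : ℤ) + 1) (abs_of_nonneg (by positivity)) ht, two_mul]
  rw [Set.ncard_eq_sum_ncard_preimage_cons (l1Ball_finite _ _) _ hfirst, sum_Icc_neg_self,
    preimage_cons_l1Ball (t := 0) (by simp) (Nat.zero_le r), Nat.sub_zero,
    sum_congr rfl fun t ht => hfiber t (mem_range.mp ht), ← mul_sum, ← sum_range_reflect]
  congr 2
  refine sum_congr rfl fun t ht => ?_
  rw [show r - (r - 1 - t + 1) = t by have := mem_range.mp ht; omega]

theorem ncard_l1Ball (n r : ℕ) : (l1Ball n r).ncard = delannoy n r := by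
  induction n generalizing r with
  | zero => simp [l1Ball, delannoy_zero_left]
  | succ n ih => simp only [ncard_l1Ball_succ, delannoy_succ, ih]

def oddBall (n p : ℕ) : Set (Fin (n + 1) → ℤ) :=
  {x | |2 * x 0 - 1| + 2 * ∑ i : Fin n, |x i.succ| ≤ 2 * p + 1}

theorem latticeBallOdd_succ (n p : ℕ) (h : 0 < n + 1) :
    latticeBallOdd (n + 1) p h = (oddBall n p).ncard := by
  have herase (x : Fin (n + 1) → ℤ) :
      ∑ i ∈ univ.erase 0, 2 * |x i| = 2 * ∑ i : Fin n, |x i.succ| := by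
    rw [sum_erase_eq_sub (mem_univ 0), Fin.sum_univ_succ, ← mul_sum]
    ring
  simp only [latticeBallOdd, oddBall, Fin.zero_eta, herase]

theorem oddBall_subset_l1Ball (n p : ℕ) : oddBall n p ⊆ l1Ball (n + 1) (p + 1) := by
  intro x hx
  simp only [oddBall, l1Ball, Set.mem_ofPred_eq, Fin.sum_univ_succ] at hx ⊢
  have := abs_sub_abs_le_abs_sub (2 * x 0) 1
  rw [abs_mul, abs_two, abs_one] at this
  push_cast
  linarith

theorem preimage_cons_oddBall {n p t : ℕ} {a : ℤ} (ha : |2 * a - 1| = 2 * t + 1)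
    (ht : t ≤ p) :
    Fin.cons a ⁻¹' oddBall n p = l1Ball n (p - t) := by
  ext y
  simp only [oddBall, l1Ball, Set.preimage_ofPred_eq, Set.mem_ofPred_eq, Fin.cons_zero,
    Fin.cons_succ, ha]
  omega

theorem ncard_oddBall (n p : ℕ) :
    (oddBall n p).ncard = 2 * ∑ r ∈ range (p + 1), (l1Ball n r).ncard := by
  have hfirst (x) (hx : x ∈ oddBall n p) : x 0 ∈ Icc (-(p : ℤ)) (p + 1) := by
    have hsum : 0 ≤ ∑ i : Fin n, |x i.succ| := sum_nonneg fun i _ => abs_nonneg _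
    have hx : |2 * x 0 - 1| + 2 * ∑ i : Fin n, |x i.succ| ≤ 2 * p + 1 := hx
    have := abs_le.mp (show |2 * x 0 - 1| ≤ 2 * p + 1 by linarith)
    rw [mem_Icc]
    omega
  have hfiber (t : ℕ) (ht : t ≤ p) :
      (Fin.cons (-(t : ℤ)) ⁻¹' oddBall n p).ncard +
          (Fin.cons ((t : ℤ) + 1) ⁻¹' oddBall n p).ncard =
        2 * (l1Ball n (p - t)).ncard := by
    rw [preimage_cons_oddBall ((abs_of_neg (by omega)).trans (by ring)) ht,
      preimage_cons_oddBall ((abs_of_nonneg (by omega)).trans (by ring)) ht, two_mul]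
  rw [Set.ncard_eq_sum_ncard_preimage_cons ((l1Ball_finite _ _).subset (oddBall_subset_l1Ball n p))
      _ hfirst, sum_Icc_neg_add_one,
    sum_congr rfl fun t ht => hfiber t (Nat.lt_succ_iff.mp (mem_range.mp ht)), ← mul_sum,
    ← sum_range_reflect]
  congr 1
  refine sum_congr rfl fun t ht => ?_
  rw [show p - (p + 1 - 1 - t) = t by have := mem_range.mp ht; omega]

/-- For all `k ≥ 1` and `p ≥ 0`, the number of lattice points in a maximal
L¹-ball of odd diameter `2p+1` in `ℤ^k` equals `2·∑_{i=0}^{p} C(k−1,i)·C(k+p−i, p−i)`,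
which also equals `2·∑_{i=0}^{p} C(k−1,p−i)·C(k+i, i)`. -/
theorem latticeBallOdd_eq (k p : ℕ) (hk : 1 ≤ k) :
    latticeBallOdd k p hk =
      2 * ∑ i ∈ Finset.range (p + 1), Nat.choose (k - 1) i * Nat.choose (k + p - i) (p - i) ∧
    latticeBallOdd k p hk =
      2 * ∑ i ∈ Finset.range (p + 1), Nat.choose (k - 1) (p - i) * Nat.choose (k + i) i := by
  obtain ⟨n, rfl⟩ := Nat.exists_eq_add_of_le' hk
  have hcount : latticeBallOdd (n + 1) p hk =
      2 * ∑ i ∈ range (p + 1), n.choose i * (n + 1 + p - i).choose (p - i) := by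
    simp only [latticeBallOdd_succ, ncard_oddBall, ncard_l1Ball, sum_range_delannoy]
  refine ⟨by simpa using hcount, hcount.trans ?_⟩
  rw [← sum_range_reflect]
  refine congrArg (2 * ·) (sum_congr rfl fun i hi => ?_)
  have hi : i ≤ p := Nat.lt_succ_iff.mp (mem_range.mp hi)
  rw [show p + 1 - 1 - i = p - i by omega, Nat.sub_sub_self hi,
    show n + 1 + p - (p - i) = n + 1 + i by omega, Nat.add_sub_cancel]
end

section
/- For every integer k ≥ 0, the following identity of formal power series over ℤ holds: (1 − X)^{k+1} · Σ_{p≥0} f(k,p) X^p = (1 + X)^k, where f(k,p) is the number of lattice points in the closed L¹-ball of radius p in ℤ^k. Equivalently, the generating function Σ_{p≥0} f(k,p) X^p equals (1+X)^k/(1−X)^{k+1}. -/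
/-- `latticeBall k p` is the number of lattice points `x ∈ ℤ^k` with `∑ i, |x i| ≤ p`,
i.e. the cardinality of the closed L¹-ball `B_k(p)` centered at a lattice point. -/
noncomputable def latticeBall (k p : ℕ) : ℕ :=
  Set.ncard {x : Fin k → ℤ | ∑ i, |x i| ≤ (p : ℤ)}

/-!
Split the ball `B_{k+1}(p+1)` according to the first coordinate `t`. The points with `t = 0`
form a copy of `B_k(p+1)`, those with `t = -1` a copy of `B_k(p)`, and moving `t` one step
towards zero maps the remaining points bijectively onto `B_{k+1}(p)`, since it is a bijection
`ℤ ∖ {0, -1} ≃ ℤ` lowering `|t|` by one. Hence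
`f(k+1, p+1) - f(k+1, p) = f(k, p+1) + f(k, p)` and `f(k+1, 0) = f(k, 0) = 1`, which says
`(1 - X) F_{k+1} = (1 + X) F_k` for the generating functions; with `F_0 = 1 / (1 - X)` this
gives the theorem by induction on `k`.
-/

namespace LatticeBall

open Finset

noncomputable def ball (k p : ℕ) : Finset (Fin k → ℤ) :=
  {x ∈ Fintype.piFinset fun _ => Icc (-(p : ℤ)) p | ∑ i, |x i| ≤ p}

theorem mem_ball {k p : ℕ} {x : Fin k → ℤ} : x ∈ ball k p ↔ ∑ i, |x i| ≤ p := by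
  refine ⟨fun h => (mem_filter.1 h).2, fun h => mem_filter.2 ⟨?_, h⟩⟩
  refine Fintype.mem_piFinset.2 fun i => mem_Icc.2 (abs_le.1 ?_)
  exact (single_le_sum (fun j _ => abs_nonneg (x j)) (mem_univ i)).trans h

theorem mem_ball_succ {k p : ℕ} {x : Fin (k + 1) → ℤ} :
    x ∈ ball (k + 1) p ↔ |x 0| + ∑ i, |Fin.tail x i| ≤ p := by
  rw [mem_ball, Fin.sum_univ_succ]
  rfl

theorem ball_zero (k : ℕ) : ball k 0 = {0} := by
  ext x
  simp only [mem_ball, mem_singleton, Nat.cast_zero]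
  have hx : 0 ≤ ∑ i, |x i| := sum_nonneg fun i _ => abs_nonneg (x i)
  rw [hx.ge_iff_eq, eq_comm, Fintype.sum_eq_zero_iff_of_nonneg fun i => abs_nonneg (x i)]
  simp [funext_iff]

theorem card_filter_head_eq {k p n : ℕ} {t : ℤ} (ht : |t| = n) :
    #{x ∈ ball (k + 1) (p + n) | x 0 = t} = #(ball k p) := by
  refine card_nbij' Fin.tail (Fin.cons (α := fun _ => ℤ) t) ?_ ?_ ?_ ?_
  · intro x hx
    obtain ⟨hball, rfl⟩ := mem_filter.1 (mem_coe.1 hx)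
    rw [mem_ball_succ, ht] at hball
    exact mem_coe.2 (mem_ball.2 (by push_cast at hball; linarith))
  · intro y hy
    refine mem_filter.2 ⟨mem_ball_succ.2 ?_, Fin.cons_zero _ _⟩
    rw [Fin.cons_zero, Fin.tail_cons, ht]
    push_cast
    linarith [mem_ball.1 (mem_coe.1 hy)]
  · intro x hx
    rw [← (mem_filter.1 (mem_coe.1 hx)).2, Fin.cons_self_tail]
  · intro y _
    exact Fin.tail_cons _ _

def towardZero (t : ℤ) : ℤ := if 0 < t then t - 1 else t + 1

def awayFromZero (u : ℤ) : ℤ := if 0 ≤ u then u + 1 else u - 1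

theorem abs_awayFromZero (u : ℤ) : |awayFromZero u| = |u| + 1 := by
  unfold awayFromZero
  split_ifs <;> simp only [abs_eq_max_neg] <;> omega

theorem towardZero_awayFromZero (u : ℤ) : towardZero (awayFromZero u) = u := by
  unfold towardZero awayFromZero
  split_ifs <;> omega

theorem awayFromZero_towardZero {t : ℤ} (h₀ : t ≠ 0) (h₁ : t ≠ -1) :
    awayFromZero (towardZero t) = t := by
  unfold towardZero awayFromZero
  split_ifs <;> omega

theorem awayFromZero_ne_zero_and_ne_neg_one (u : ℤ) :
    awayFromZero u ≠ 0 ∧ awayFromZero u ≠ -1 := by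
  unfold awayFromZero
  split_ifs <;> omega

theorem card_filter_head_ne_zero_ne_neg_one (k p : ℕ) :
    #{x ∈ ball (k + 1) (p + 1) | x 0 ≠ 0 ∧ x 0 ≠ -1} = #(ball (k + 1) p) := by
  refine card_nbij' (fun x => Fin.cons (towardZero (x 0)) (Fin.tail x))
    (fun y => Fin.cons (awayFromZero (y 0)) (Fin.tail y)) ?_ ?_ ?_ ?_
  · intro x hx
    obtain ⟨hball, h₀, h₁⟩ := mem_filter.1 (mem_coe.1 hx)
    have habs := abs_awayFromZero (towardZero (x 0))
    rw [awayFromZero_towardZero h₀ h₁] at habs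
    rw [mem_ball_succ] at hball
    refine mem_coe.2 (mem_ball_succ.2 ?_)
    simp only [Fin.cons_zero, Fin.tail_cons]
    push_cast at hball ⊢
    linarith
  · intro y hy
    refine mem_coe.2 (mem_filter.2 ⟨mem_ball_succ.2 ?_, ?_⟩)
    · simp only [Fin.cons_zero, Fin.tail_cons, abs_awayFromZero]
      have hball := mem_ball_succ.1 (mem_coe.1 hy)
      push_cast at hball ⊢
      linarith
    · simpa only [Fin.cons_zero] using awayFromZero_ne_zero_and_ne_neg_one (y 0)
  · intro x hx
    obtain ⟨-, h₀, h₁⟩ := mem_filter.1 (mem_coe.1 hx)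
    simp only [Fin.cons_zero, Fin.tail_cons, awayFromZero_towardZero h₀ h₁, Fin.cons_self_tail]
  · intro y _
    simp only [Fin.cons_zero, Fin.tail_cons, towardZero_awayFromZero, Fin.cons_self_tail]

theorem card_ball_succ_succ (k p : ℕ) :
    #(ball (k + 1) (p + 1)) = #(ball (k + 1) p) + #(ball k (p + 1)) + #(ball k p) := by
  have hsplit₀ := card_filter_add_card_filter_not (s := ball (k + 1) (p + 1)) (· 0 = 0)
  have hsplit₁ := card_filter_add_card_filter_not
    (s := {x ∈ ball (k + 1) (p + 1) | ¬x 0 = 0}) (· 0 = -1)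
  rw [filter_filter, filter_filter] at hsplit₁
  have hneg : {x ∈ ball (k + 1) (p + 1) | ¬x 0 = 0 ∧ x 0 = -1} =
      {x ∈ ball (k + 1) (p + 1) | x 0 = -1} :=
    filter_congr fun x _ => and_iff_right_of_imp fun h => h ▸ by decide
  have hzero : #{x ∈ ball (k + 1) (p + 1) | x 0 = 0} = #(ball k (p + 1)) :=
    card_filter_head_eq (p := p + 1) (n := 0) abs_zero
  have hneg_one : #{x ∈ ball (k + 1) (p + 1) | x 0 = -1} = #(ball k p) :=
    card_filter_head_eq (p := p) (n := 1) (by simp)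
  rw [hneg, hneg_one, card_filter_head_ne_zero_ne_neg_one] at hsplit₁
  rw [hzero] at hsplit₀
  omega

end LatticeBall

open Finset LatticeBall in
theorem latticeBall_eq_card_ball (k p : ℕ) : latticeBall k p = #(ball k p) := by
  rw [latticeBall, ← Set.ncard_coe_finset]
  congr
  ext x
  exact mem_ball.symm

theorem latticeBall_zero_left (p : ℕ) : latticeBall 0 p = 1 := by
  rw [latticeBall_eq_card_ball, Finset.card_eq_one]
  refine ⟨0, Finset.eq_singleton_iff_unique_mem.2 ⟨?_, fun x _ => Subsingleton.elim _ _⟩⟩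
  exact LatticeBall.mem_ball.2 (by simp)

theorem latticeBall_zero_right (k : ℕ) : latticeBall k 0 = 1 := by
  rw [latticeBall_eq_card_ball, LatticeBall.ball_zero, Finset.card_singleton]

theorem latticeBall_succ_succ (k p : ℕ) :
    latticeBall (k + 1) (p + 1) =
      latticeBall (k + 1) p + latticeBall k (p + 1) + latticeBall k p := by
  simp only [latticeBall_eq_card_ball, LatticeBall.card_ball_succ_succ]

open PowerSeries

theorem PowerSeries.one_sub_X_mul_mk_eq_one_add_X_mul_mk {R : Type*} [CommRing R] {a b : ℕ → R}
    (h₀ : a 0 = b 0) (hsucc : ∀ n, a (n + 1) = a n + b (n + 1) + b n) :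
    (1 - X) * mk a = (1 + X) * mk b := by
  ext n
  rcases n with _ | n
  · simp [sub_mul, add_mul, h₀]
  · simp only [sub_mul, add_mul, one_mul, map_sub, map_add, coeff_succ_X_mul, coeff_mk, hsucc]
    ring

theorem one_sub_X_mul_latticeBall_genFun_succ (k : ℕ) :
    (1 - X) * mk (fun p => (latticeBall (k + 1) p : ℤ)) =
      (1 + X) * mk (fun p => (latticeBall k p : ℤ)) := by
  refine one_sub_X_mul_mk_eq_one_add_X_mul_mk ?_ fun p => ?_
  · simp only [latticeBall_zero_right]
  · simp only [latticeBall_succ_succ]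
    push_cast
    ring

/-- For every `k ≥ 0`, in `ℤ⟦X⟧` one has
`(1 − X)^{k+1} · ∑_{p≥0} f(k,p) Xᵖ = (1 + X)^k`, i.e. the generating function of the
lattice-point counts of closed L¹-balls in `ℤ^k` is `(1+X)^k/(1−X)^{k+1}`. -/
theorem latticeBall_genFun (k : ℕ) :
    (1 - (PowerSeries.X : PowerSeries ℤ)) ^ (k + 1) *
        PowerSeries.mk (fun p => (latticeBall k p : ℤ)) =
      (1 + (PowerSeries.X : PowerSeries ℤ)) ^ k := by
  induction k with
  | zero =>
    simp only [latticeBall_zero_left, zero_add, pow_one, pow_zero, Nat.cast_one]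
    rw [mul_comm]
    exact mk_one_mul_one_sub_eq_one ℤ
  | succ k ih =>
    rw [pow_succ, mul_assoc, one_sub_X_mul_latticeBall_genFun_succ, mul_left_comm, ih, pow_succ']
end
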